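/- arXiv:1210.8207 — 2 statements merged into one kernel-verified Lean document; each statement's English description precedes it below -/
import Mathlib

section
/- For the homogenized Weyl algebra B_n, there is an isomorphism of ℤ-graded K-algebras A_n ⊗_K K[Z,Z^{-1}] ≅ B_n ⊗_{K[Z]} K[Z,Z^{-1}], where A_n = B_n/(Z-1)B_n is the Weyl algebra placed in degree zero. -/
/-- Generators of the homogenized Weyl algebra: `X i`, `D i` (the `δ_i`) and `Z`. -/
inductive HWGen (n : ℕ) : Type
  | X : Fin n → HWGen n
  | D : Fin n → HWGen n
  | Z : HWGen n

open FreeAlgebra in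
/-- The defining relations of the homogenized Weyl algebra `B_n`:
`δ_i X_j = X_j δ_i + ∂_{ij} Z²`, `[X_i, X_j] = 0`, `[δ_i, δ_j] = 0`,
`[X_i, Z] = 0`, `[δ_i, Z] = 0`. -/
inductive HWRel (K : Type) [Field K] (n : ℕ) :
    FreeAlgebra K (HWGen n) → FreeAlgebra K (HWGen n) → Prop
  | DX (i j : Fin n) :
      HWRel K n (ι K (HWGen.D i) * ι K (HWGen.X j))
        (ι K (HWGen.X j) * ι K (HWGen.D i) +
          if i = j then (ι K (HWGen.Z (n := n))) ^ 2 else 0)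
  | XX (i j : Fin n) :
      HWRel K n (ι K (HWGen.X i) * ι K (HWGen.X j)) (ι K (HWGen.X j) * ι K (HWGen.X i))
  | DD (i j : Fin n) :
      HWRel K n (ι K (HWGen.D i) * ι K (HWGen.D j)) (ι K (HWGen.D j) * ι K (HWGen.D i))
  | XZ (i : Fin n) :
      HWRel K n (ι K (HWGen.X i) * ι K (HWGen.Z (n := n)))
        (ι K (HWGen.Z (n := n)) * ι K (HWGen.X i))
  | DZ (i : Fin n) :
      HWRel K n (ι K (HWGen.D i) * ι K (HWGen.Z (n := n)))
        (ι K (HWGen.Z (n := n)) * ι K (HWGen.D i))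

/-- The homogenized Weyl algebra `B_n`. -/
def HWeyl (K : Type) [Field K] (n : ℕ) : Type := RingQuot (HWRel K n)

noncomputable instance (K : Type) [Field K] (n : ℕ) : Ring (HWeyl K n) :=
  inferInstanceAs (Ring (RingQuot (HWRel K n)))

noncomputable instance (K : Type) [Field K] (n : ℕ) : Algebra K (HWeyl K n) :=
  inferInstanceAs (Algebra K (RingQuot (HWRel K n)))

/-- The central element `Z` of `B_n`. -/
noncomputable def HWeyl.zElem (K : Type) [Field K] (n : ℕ) : HWeyl K n :=
  RingQuot.mkAlgHom K (HWRel K n) (FreeAlgebra.ι K (HWGen.Z (n := n)))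

/-- Generators of the Weyl algebra: `X i` and `D i` (the `δ_i`). -/
inductive WGen (n : ℕ) : Type
  | X : Fin n → WGen n
  | D : Fin n → WGen n

open FreeAlgebra in
/-- The defining relations of the Weyl algebra `A_n`:
`δ_i X_j = X_j δ_i + ∂_{ij}`, `[X_i, X_j] = 0`, `[δ_i, δ_j] = 0`. -/
inductive WRel (K : Type) [Field K] (n : ℕ) :
    FreeAlgebra K (WGen n) → FreeAlgebra K (WGen n) → Prop
  | DX (i j : Fin n) :
      WRel K n (ι K (WGen.D i) * ι K (WGen.X j))
        (ι K (WGen.X j) * ι K (WGen.D i) + if i = j then 1 else 0)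
  | XX (i j : Fin n) :
      WRel K n (ι K (WGen.X i) * ι K (WGen.X j)) (ι K (WGen.X j) * ι K (WGen.X i))
  | DD (i j : Fin n) :
      WRel K n (ι K (WGen.D i) * ι K (WGen.D j)) (ι K (WGen.D j) * ι K (WGen.D i))

/-- The Weyl algebra `A_n`. -/
def Weyl (K : Type) [Field K] (n : ℕ) : Type := RingQuot (WRel K n)

noncomputable instance (K : Type) [Field K] (n : ℕ) : Ring (Weyl K n) :=
  inferInstanceAs (Ring (RingQuot (WRel K n)))

noncomputable instance (K : Type) [Field K] (n : ℕ) : Algebra K (Weyl K n) :=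
  inferInstanceAs (Algebra K (RingQuot (WRel K n)))

namespace WLAux

noncomputable section
open AddMonoidAlgebra

variable (K : Type) [Field K] (n : ℕ)

/-- Generators of the Weyl algebra, as elements. -/
def wX (i : Fin n) : Weyl K n :=
  RingQuot.mkAlgHom K (WRel K n) (FreeAlgebra.ι K (WGen.X i))
def wD (i : Fin n) : Weyl K n :=
  RingQuot.mkAlgHom K (WRel K n) (FreeAlgebra.ι K (WGen.D i))

/-- Generators of the homogenized Weyl algebra, as elements. -/
def hX (i : Fin n) : HWeyl K n :=
  RingQuot.mkAlgHom K (HWRel K n) (FreeAlgebra.ι K (HWGen.X i))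
def hD (i : Fin n) : HWeyl K n :=
  RingQuot.mkAlgHom K (HWRel K n) (FreeAlgebra.ι K (HWGen.D i))

lemma zElem_def : HWeyl.zElem K n
    = RingQuot.mkAlgHom K (HWRel K n) (FreeAlgebra.ι K (HWGen.Z (n := n))) := rfl

def mkH : FreeAlgebra K (HWGen n) →ₐ[K] HWeyl K n := RingQuot.mkAlgHom K (HWRel K n)

lemma mkH_surj : Function.Surjective (mkH K n) := RingQuot.mkAlgHom_surjective K (HWRel K n)

def mkW : FreeAlgebra K (WGen n) →ₐ[K] Weyl K n := RingQuot.mkAlgHom K (WRel K n)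

lemma mkW_surj : Function.Surjective (mkW K n) := RingQuot.mkAlgHom_surjective K (WRel K n)

lemma weyl_dx (i j : Fin n) :
    wD K n i * wX K n j = wX K n j * wD K n i + if i = j then 1 else 0 := by
  have h := RingQuot.mkAlgHom_rel K (WRel.DX (K := K) i j)
  simp [wX, wD, map_mul, map_add, apply_ite (RingQuot.mkAlgHom K (WRel K n))] at h ⊢
  exact h

lemma weyl_xx (i j : Fin n) : wX K n i * wX K n j = wX K n j * wX K n i := by
  have h := RingQuot.mkAlgHom_rel K (WRel.XX (K := K) i j)
  simp [wX, map_mul] at h ⊢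
  exact h

lemma weyl_dd (i j : Fin n) : wD K n i * wD K n j = wD K n j * wD K n i := by
  have h := RingQuot.mkAlgHom_rel K (WRel.DD (K := K) i j)
  simp [wD, map_mul] at h ⊢
  exact h

lemma hweyl_dx (i j : Fin n) :
    hD K n i * hX K n j
      = hX K n j * hD K n i + if i = j then (HWeyl.zElem K n) ^ 2 else 0 := by
  have h := RingQuot.mkAlgHom_rel K (HWRel.DX (K := K) i j)
  simp [hX, hD, zElem_def, map_mul, map_add, map_pow,
    apply_ite (RingQuot.mkAlgHom K (HWRel K n))] at h ⊢
  exact h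

lemma hweyl_xx (i j : Fin n) : hX K n i * hX K n j = hX K n j * hX K n i := by
  have h := RingQuot.mkAlgHom_rel K (HWRel.XX (K := K) i j)
  simp [hX, map_mul] at h ⊢
  exact h

lemma hweyl_dd (i j : Fin n) : hD K n i * hD K n j = hD K n j * hD K n i := by
  have h := RingQuot.mkAlgHom_rel K (HWRel.DD (K := K) i j)
  simp [hD, map_mul] at h ⊢
  exact h

lemma hweyl_xz (i : Fin n) :
    hX K n i * HWeyl.zElem K n = HWeyl.zElem K n * hX K n i := by
  have h := RingQuot.mkAlgHom_rel K (HWRel.XZ (K := K) (n := n) i)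
  simp [hX, zElem_def, map_mul] at h ⊢
  exact h

lemma hweyl_dz (i : Fin n) :
    hD K n i * HWeyl.zElem K n = HWeyl.zElem K n * hD K n i := by
  have h := RingQuot.mkAlgHom_rel K (HWRel.DZ (K := K) (n := n) i)
  simp [hD, zElem_def, map_mul] at h ⊢
  exact h

/-- `Z` is central in `B_n`. -/
lemma z_central (b : HWeyl K n) : HWeyl.zElem K n * b = b * HWeyl.zElem K n := by
  obtain ⟨y, rfl⟩ := mkH_surj K n b
  induction y using FreeAlgebra.induction with
  | grade0 r => rw [AlgHom.commutes]; exact (Algebra.commutes r _).symm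
  | grade1 g =>
      cases g with
      | X i => exact (hweyl_xz K n i).symm
      | D i => exact (hweyl_dz K n i).symm
      | Z => rfl
  | mul a b ha hb => rw [map_mul, ← mul_assoc, ha, mul_assoc, hb, ← mul_assoc]
  | add a b ha hb => rw [map_add, mul_add, add_mul, ha, hb]

/-- The map on generators defining `ψ : B_n → A_n[Z,Z⁻¹]`. -/
def psiGen : HWGen n → LaurentPolynomial (Weyl K n)
  | .X i => AddMonoidAlgebra.single (1 : ℤ) (wX K n i)
  | .D i => AddMonoidAlgebra.single (1 : ℤ) (wD K n i)
  | .Z => AddMonoidAlgebra.single (1 : ℤ) 1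

def psiFree : FreeAlgebra K (HWGen n) →ₐ[K] LaurentPolynomial (Weyl K n) :=
  FreeAlgebra.lift K (psiGen K n)

lemma psi_rel : ∀ ⦃x y⦄, HWRel K n x y → psiFree K n x = psiFree K n y := by
  intro x y h
  induction h with
  | DX i j =>
      simp only [psiFree, map_mul, map_add, FreeAlgebra.lift_ι_apply, psiGen,
        apply_ite (FreeAlgebra.lift K (psiGen K n)), map_pow, map_zero,
        AddMonoidAlgebra.single_mul_single, AddMonoidAlgebra.single_pow,
        weyl_dx, AddMonoidAlgebra.single_add, one_pow, one_mul]
      by_cases hij : i = j <;>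
        simp only [hij, if_true, if_false, smul_eq_mul, mul_one, add_right_inj] <;>
        norm_num
  | XX i j =>
      simp only [psiFree, map_mul, FreeAlgebra.lift_ι_apply, psiGen,
        AddMonoidAlgebra.single_mul_single, weyl_xx K n i j, add_comm]
  | DD i j =>
      simp only [psiFree, map_mul, FreeAlgebra.lift_ι_apply, psiGen,
        AddMonoidAlgebra.single_mul_single, weyl_dd K n i j, add_comm]
  | XZ i =>
      simp only [psiFree, map_mul, FreeAlgebra.lift_ι_apply, psiGen,
        AddMonoidAlgebra.single_mul_single, mul_one, one_mul]
  | DZ i =>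
      simp only [psiFree, map_mul, FreeAlgebra.lift_ι_apply, psiGen,
        AddMonoidAlgebra.single_mul_single, mul_one, one_mul]

/-- `ψ : B_n → A_n[Z,Z⁻¹]`, sending `X_i ↦ x_i Z`, `δ_i ↦ d_i Z`, `Z ↦ Z`. -/
def psi : HWeyl K n →ₐ[K] LaurentPolynomial (Weyl K n) :=
  RingQuot.liftAlgHom K ⟨psiFree K n, psi_rel K n⟩

@[simp] lemma psi_hX (i : Fin n) :
    psi K n (hX K n i) = AddMonoidAlgebra.single (1 : ℤ) (wX K n i) := by
  rw [psi, hX]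
  exact (RingQuot.liftAlgHom_mkAlgHom_apply _ _ _ _).trans (FreeAlgebra.lift_ι_apply _ _)

@[simp] lemma psi_hD (i : Fin n) :
    psi K n (hD K n i) = AddMonoidAlgebra.single (1 : ℤ) (wD K n i) := by
  rw [psi, hD]
  exact (RingQuot.liftAlgHom_mkAlgHom_apply _ _ _ _).trans (FreeAlgebra.lift_ι_apply _ _)

@[simp] lemma psi_z :
    psi K n (HWeyl.zElem K n) = AddMonoidAlgebra.single (1 : ℤ) 1 := by
  rw [psi, zElem_def]
  exact (RingQuot.liftAlgHom_mkAlgHom_apply _ _ _ _).trans (FreeAlgebra.lift_ι_apply _ _)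

lemma psi_z_pow (j : ℕ) :
    psi K n (HWeyl.zElem K n ^ j) = AddMonoidAlgebra.single (j : ℤ) 1 := by
  rw [map_pow, psi_z, AddMonoidAlgebra.single_pow, one_pow, nsmul_eq_mul, mul_one]

lemma single_eq_T (j : ℤ) :
    (AddMonoidAlgebra.single j (1 : Weyl K n) : LaurentPolynomial (Weyl K n))
      = LaurentPolynomial.T j := rfl

lemma single_one_comm (j : ℤ) (q : LaurentPolynomial (Weyl K n)) :
    AddMonoidAlgebra.single j (1 : Weyl K n) * q
      = q * AddMonoidAlgebra.single j (1 : Weyl K n) := by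
  rw [single_eq_T]; exact LaurentPolynomial.T_mul j q

lemma psi_zpow_mul (j : ℕ) (b : HWeyl K n) :
    psi K n (HWeyl.zElem K n ^ j * b)
      = AddMonoidAlgebra.single (j : ℤ) 1 * psi K n b := by
  rw [map_mul, psi_z_pow]

lemma exists_rep (c : Weyl K n) :
    ∃ (b : HWeyl K n) (ℓ : ℕ), psi K n b = AddMonoidAlgebra.single (ℓ : ℤ) c := by
  obtain ⟨y, rfl⟩ := mkW_surj K n c
  induction y using FreeAlgebra.induction with
  | grade0 r =>
      refine ⟨algebraMap K _ r, 0, ?_⟩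
      rw [AlgHom.commutes, AlgHom.commutes]
      rfl
  | grade1 g =>
      cases g with
      | X i => exact ⟨hX K n i, 1, psi_hX K n i⟩
      | D i => exact ⟨hD K n i, 1, psi_hD K n i⟩
  | mul a b ha hb =>
      obtain ⟨ba, la, hA⟩ := ha
      obtain ⟨bb, lb, hB⟩ := hb
      refine ⟨ba * bb, la + lb, ?_⟩
      rw [map_mul, map_mul, hA, hB, AddMonoidAlgebra.single_mul_single]
      norm_cast
  | add a b ha hb =>
      obtain ⟨ba, la, hA⟩ := ha
      obtain ⟨bb, lb, hB⟩ := hb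
      refine ⟨HWeyl.zElem K n ^ lb * ba + HWeyl.zElem K n ^ la * bb, la + lb, ?_⟩
      rw [map_add, map_add, psi_zpow_mul, psi_zpow_mul, hA, hB,
        AddMonoidAlgebra.single_mul_single, AddMonoidAlgebra.single_mul_single,
        one_mul, one_mul, AddMonoidAlgebra.single_add]
      congr 2 <;> push_cast <;> ring

lemma exists_rep' (c : Weyl K n) :
    ∃ ℓ₀ : ℕ, ∀ m : ℤ, (ℓ₀ : ℤ) ≤ m →
      ∃ b : HWeyl K n, psi K n b = AddMonoidAlgebra.single m c := by
  obtain ⟨b, ℓ, hb⟩ := exists_rep K n c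
  refine ⟨ℓ, fun m hm => ⟨HWeyl.zElem K n ^ (m - ℓ).toNat * b, ?_⟩⟩
  rw [psi_zpow_mul, hb, AddMonoidAlgebra.single_mul_single, one_mul]
  congr 1
  omega

lemma psi_surj_pow (p : LaurentPolynomial (Weyl K n)) :
    ∃ (b : HWeyl K n) (k : ℕ),
      p * AddMonoidAlgebra.single (k : ℤ) 1 = psi K n b := by
  induction p using AddMonoidAlgebra.induction with
  | zero => exact ⟨0, 0, by simp⟩
  | single_add m c f _ _ ih =>
      obtain ⟨b₁, k₁, h₁⟩ := ih
      obtain ⟨ℓ₀, hrep⟩ := exists_rep' K n c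
      set N : ℕ := k₁ + ℓ₀ + m.natAbs with hN
      obtain ⟨b₂, h₂⟩ := hrep (m + N) (by omega)
      refine ⟨b₂ + HWeyl.zElem K n ^ (N - k₁) * b₁, N, ?_⟩
      rw [add_mul, map_add, psi_zpow_mul, ← h₁]
      congr 1
      · rw [h₂, AddMonoidAlgebra.single_mul_single, mul_one]
      · rw [← single_one_comm, ← mul_assoc, ← single_one_comm, ← mul_assoc,
          AddMonoidAlgebra.single_mul_single, mul_one]
        congr 2
        omega

lemma single_one_inv (j : ℤ) :
    AddMonoidAlgebra.single j (1 : Weyl K n) * AddMonoidAlgebra.single (-j) 1 = 1 := by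
  rw [AddMonoidAlgebra.single_mul_single, mul_one, add_neg_cancel]
  exact (AddMonoidAlgebra.one_def).symm

section Loc

variable {L : Type} [Ring L] [Algebra K L] (φ : HWeyl K n →ₐ[K] L)

lemma phi_comm_z (b : HWeyl K n) : Commute (φ b) (φ (HWeyl.zElem K n)) := by
  show _ = _
  rw [← map_mul, ← map_mul, z_central]

variable (hu : IsUnit (φ (HWeyl.zElem K n)))

/-- The inverse of `φ Z` in `L`. -/
def vinv : L := ↑hu.unit⁻¹

lemma commute_v (b : HWeyl K n) : Commute (φ b) (vinv K n φ hu) := by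
  refine Commute.units_inv_right ?_
  rw [IsUnit.unit_spec]
  exact phi_comm_z K n φ b

lemma hv (b : HWeyl K n) : vinv K n φ hu * φ b = φ b * vinv K n φ hu :=
  ((commute_v K n φ hu b).symm).eq

lemma u_mul_v : φ (HWeyl.zElem K n) * vinv K n φ hu = 1 := by
  exact hu.mul_val_inv

lemma v_mul_u : vinv K n φ hu * φ (HWeyl.zElem K n) = 1 := by
  exact hu.val_inv_mul

lemma swap_v (a b : L) (hb : vinv K n φ hu * b = b * vinv K n φ hu) :
    a * vinv K n φ hu * (b * vinv K n φ hu) = a * b * (vinv K n φ hu * vinv K n φ hu) := by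
  rw [mul_assoc a, ← mul_assoc (vinv K n φ hu), hb, mul_assoc b, ← mul_assoc a, ← mul_assoc]

/-- The map on generators defining `A_n → L`, `x_i ↦ φ(X_i) (φ Z)⁻¹`. -/
def alphaGen : WGen n → L
  | .X i => φ (hX K n i) * vinv K n φ hu
  | .D i => φ (hD K n i) * vinv K n φ hu

def alphaFree : FreeAlgebra K (WGen n) →ₐ[K] L :=
  FreeAlgebra.lift K (alphaGen K n φ hu)

lemma alpha_rel : ∀ ⦃x y⦄, WRel K n x y → alphaFree K n φ hu x = alphaFree K n φ hu y := by
  intro x y h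
  have hvv := hv K n φ hu
  induction h with
  | DX i j =>
      have key : φ (hD K n i) * φ (hX K n j)
          = φ (hX K n j) * φ (hD K n i)
            + if i = j then φ (HWeyl.zElem K n) ^ 2 else 0 := by
        rw [← map_mul, hweyl_dx, map_add]
        congr 1
        · rw [map_mul]
        · by_cases hij : i = j <;> simp [hij, map_pow]
      simp only [alphaFree, map_mul, map_add, FreeAlgebra.lift_ι_apply, alphaGen,
        apply_ite (FreeAlgebra.lift K (alphaGen K n φ hu)), map_one, map_zero]
      rw [swap_v K n φ hu _ _ (hvv _), swap_v K n φ hu _ _ (hvv _), key, add_mul,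
        ite_mul, zero_mul, sq, mul_assoc (φ (HWeyl.zElem K n)),
        ← mul_assoc (φ (HWeyl.zElem K n)) (vinv K n φ hu), u_mul_v, one_mul, u_mul_v]
  | XX i j =>
      have key : φ (hX K n i) * φ (hX K n j) = φ (hX K n j) * φ (hX K n i) := by
        rw [← map_mul, hweyl_xx, map_mul]
      simp only [alphaFree, map_mul, FreeAlgebra.lift_ι_apply, alphaGen]
      rw [swap_v K n φ hu _ _ (hvv _), swap_v K n φ hu _ _ (hvv _), key]
  | DD i j =>
      have key : φ (hD K n i) * φ (hD K n j) = φ (hD K n j) * φ (hD K n i) := by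
        rw [← map_mul, hweyl_dd, map_mul]
      simp only [alphaFree, map_mul, FreeAlgebra.lift_ι_apply, alphaGen]
      rw [swap_v K n φ hu _ _ (hvv _), swap_v K n φ hu _ _ (hvv _), key]

/-- The induced map `A_n → L`. -/
def alpha : Weyl K n →ₐ[K] L :=
  RingQuot.liftAlgHom K ⟨alphaFree K n φ hu, alpha_rel K n φ hu⟩

@[simp] lemma alpha_wX (i : Fin n) :
    alpha K n φ hu (wX K n i) = φ (hX K n i) * vinv K n φ hu := by
  rw [alpha, wX]
  exact (RingQuot.liftAlgHom_mkAlgHom_apply _ _ _ _).trans (FreeAlgebra.lift_ι_apply _ _)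

@[simp] lemma alpha_wD (i : Fin n) :
    alpha K n φ hu (wD K n i) = φ (hD K n i) * vinv K n φ hu := by
  rw [alpha, wD]
  exact (RingQuot.liftAlgHom_mkAlgHom_apply _ _ _ _).trans (FreeAlgebra.lift_ι_apply _ _)

end Loc

section Loc2

variable {L : Type} [Ring L] [Algebra K L] (φ : HWeyl K n →ₐ[K] L)
  (hu : IsUnit (φ (HWeyl.zElem K n)))
  (hc : ∀ x : L, Commute x (φ (HWeyl.zElem K n)))

/-- The map `A_n[Z,Z⁻¹] → L`. -/
def Fmap : LaurentPolynomial (Weyl K n) →ₐ[K] L :=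
  AddMonoidAlgebra.liftNCAlgHom (alpha K n φ hu)
    ((Units.coeHom L).comp (zpowersHom Lˣ hu.unit))
    (fun a y => by
      have h1 : Commute (alpha K n φ hu a) ↑hu.unit := by
        rw [hu.unit_spec]; exact hc _
      exact h1.units_zpow_right y.toAdd)

lemma Fmap_single (m : ℤ) (c : Weyl K n) :
    Fmap K n φ hu hc (AddMonoidAlgebra.single m c)
      = alpha K n φ hu c * ↑(hu.unit ^ m) := by
  simp only [Fmap, AddMonoidAlgebra.liftNCAlgHom, AddMonoidAlgebra.liftNCRingHom,
    AlgHom.coe_mk, RingHom.coe_mk, MonoidHom.coe_mk, OneHom.coe_mk]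
  exact AddMonoidAlgebra.liftNC_single _ _ m c

lemma Fmap_psi (b : HWeyl K n) : Fmap K n φ hu hc (psi K n b) = φ b := by
  obtain ⟨y, rfl⟩ := mkH_surj K n b
  induction y using FreeAlgebra.induction with
  | grade0 r =>
      rw [AlgHom.commutes (mkH K n)]
      show Fmap K n φ hu hc (psi K n (algebraMap K (HWeyl K n) r))
        = φ (algebraMap K (HWeyl K n) r)
      rw [AlgHom.commutes, AlgHom.commutes, AlgHom.commutes]
  | grade1 g =>
      cases g with
      | X i =>
          rw [show mkH K n (FreeAlgebra.ι K (HWGen.X i))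
              = hX K n i from rfl, psi_hX, Fmap_single, alpha_wX, zpow_one,
            hu.unit_spec, mul_assoc, v_mul_u, mul_one]
      | D i =>
          rw [show mkH K n (FreeAlgebra.ι K (HWGen.D i))
              = hD K n i from rfl, psi_hD, Fmap_single, alpha_wD, zpow_one,
            hu.unit_spec, mul_assoc, v_mul_u, mul_one]
      | Z =>
          rw [show mkH K n (FreeAlgebra.ι K (HWGen.Z (n := n)))
              = HWeyl.zElem K n from rfl, psi_z, Fmap_single, map_one, one_mul,
            zpow_one, hu.unit_spec]
  | mul a b ha hb => simp only [map_mul, ha, hb]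
  | add a b ha hb => simp only [map_add, ha, hb]

end Loc2
end
end WLAux

/-- For the homogenized Weyl algebra `B_n`, there is an isomorphism of `K`-algebras
`A_n ⊗_K K[Z,Z⁻¹] ≅ B_n ⊗_{K[Z]} K[Z,Z⁻¹]`.  Here `A_n ⊗_K K[Z,Z⁻¹]` is the Laurent
polynomial ring `A_n[Z,Z⁻¹]` over the Weyl algebra, and `B_n ⊗_{K[Z]} K[Z,Z⁻¹]` is the
localization `L` of `B_n` at the central multiplicative set `{1, Z, Z², …}`
(characterized by the usual localization properties of `φ : B_n → L`). -/
theorem weyl_laurent_iso_localized_HWeyl (K : Type) [Field K] [CharZero K] (n : ℕ)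
    (L : Type) [Ring L] [Algebra K L] (φ : HWeyl K n →ₐ[K] L)
    (hunit : IsUnit (φ (HWeyl.zElem K n)))
    (hsurj : ∀ x : L, ∃ (b : HWeyl K n) (k : ℕ), x * (φ (HWeyl.zElem K n)) ^ k = φ b)
    (hker : ∀ b : HWeyl K n, φ b = 0 ↔ ∃ k : ℕ, (HWeyl.zElem K n) ^ k * b = 0) :
    Nonempty (LaurentPolynomial (Weyl K n) ≃ₐ[K] L) := by
  classical
  have hc : ∀ x : L, Commute x (φ (HWeyl.zElem K n)) := by
    intro x
    obtain ⟨b, k, hb⟩ := hsurj x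
    have h1 : φ (HWeyl.zElem K n) * (x * φ (HWeyl.zElem K n) ^ k)
        = (x * φ (HWeyl.zElem K n) ^ k) * φ (HWeyl.zElem K n) := by
      rw [hb]; exact ((WLAux.phi_comm_z K n φ b).symm).eq
    have h2 : φ (HWeyl.zElem K n) * x * φ (HWeyl.zElem K n) ^ k
        = x * φ (HWeyl.zElem K n) * φ (HWeyl.zElem K n) ^ k := by
      calc φ (HWeyl.zElem K n) * x * φ (HWeyl.zElem K n) ^ k
          = φ (HWeyl.zElem K n) * (x * φ (HWeyl.zElem K n) ^ k) := by rw [mul_assoc]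
        _ = (x * φ (HWeyl.zElem K n) ^ k) * φ (HWeyl.zElem K n) := h1
        _ = x * (φ (HWeyl.zElem K n) ^ k * φ (HWeyl.zElem K n)) := by rw [mul_assoc]
        _ = x * (φ (HWeyl.zElem K n) * φ (HWeyl.zElem K n) ^ k) := by
            rw [← pow_succ, ← pow_succ']
        _ = x * φ (HWeyl.zElem K n) * φ (HWeyl.zElem K n) ^ k := by rw [mul_assoc]
    exact ((hunit.pow k).mul_right_cancel h2).symm
  set F := WLAux.Fmap K n φ hunit hc with hF
  have hFpsi := WLAux.Fmap_psi K n φ hunit hc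
  have hFsingle := WLAux.Fmap_single K n φ hunit hc
  have hsurjF : Function.Surjective F := by
    intro x
    obtain ⟨b, k, hb⟩ := hsurj x
    refine ⟨WLAux.psi K n b * AddMonoidAlgebra.single (-(k : ℤ)) 1, ?_⟩
    rw [map_mul, hFpsi, hFsingle, map_one, one_mul, ← hb]
    have e : φ (HWeyl.zElem K n) ^ k * ((hunit.unit ^ (-(k : ℤ)) : Lˣ) : L) = 1 := by
      have e1 : φ (HWeyl.zElem K n) ^ k = ((hunit.unit ^ ((k : ℤ)) : Lˣ) : L) := by
        rw [zpow_natCast, Units.val_pow_eq_pow_val, hunit.unit_spec]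
      rw [e1, ← Units.val_mul, ← zpow_add, add_neg_cancel, zpow_zero, Units.val_one]
    rw [mul_assoc, e, mul_one]
  have hinjF : Function.Injective F := by
    rw [injective_iff_map_eq_zero]
    intro p hp
    obtain ⟨b, k, hbk⟩ := WLAux.psi_surj_pow K n p
    have hb0 : φ b = 0 := by
      rw [← hFpsi b, ← hbk, map_mul, hp, zero_mul]
    obtain ⟨j, hj⟩ := (hker b).mp hb0
    have h0 : AddMonoidAlgebra.single (j : ℤ) (1 : Weyl K n)
        * (p * AddMonoidAlgebra.single (k : ℤ) 1) = 0 := by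
      rw [hbk, ← WLAux.psi_zpow_mul, hj, map_zero]
    have h2 : p * AddMonoidAlgebra.single (k : ℤ) (1 : Weyl K n) = 0 := by
      calc p * AddMonoidAlgebra.single (k : ℤ) (1 : Weyl K n)
          = (AddMonoidAlgebra.single (-(j : ℤ)) (1 : Weyl K n)
              * AddMonoidAlgebra.single (-(-(j : ℤ))) 1)
            * (p * AddMonoidAlgebra.single (k : ℤ) 1) := by
            rw [WLAux.single_one_inv, one_mul]
        _ = AddMonoidAlgebra.single (-(j : ℤ)) (1 : Weyl K n)
            * (AddMonoidAlgebra.single (-(-(j : ℤ))) 1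
              * (p * AddMonoidAlgebra.single (k : ℤ) 1)) := by rw [mul_assoc]
        _ = 0 := by rw [neg_neg, h0, mul_zero]
    calc p = p * (AddMonoidAlgebra.single (k : ℤ) (1 : Weyl K n)
          * AddMonoidAlgebra.single (-(k : ℤ)) 1) := by
          rw [WLAux.single_one_inv, mul_one]
      _ = (p * AddMonoidAlgebra.single (k : ℤ) 1)
          * AddMonoidAlgebra.single (-(k : ℤ)) 1 := by rw [mul_assoc]
      _ = 0 := by rw [h2, zero_mul]
  exact ⟨AlgEquiv.ofBijective F ⟨hinjF, hsurjF⟩⟩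
end

section
/- Let B be a K-algebra, C a subalgebra such that B is free of finite rank as a C-module, and suppose M is a C-module with minimal projective presentation; then induction commutes with syzygies: Ω_B(B ⊗_C M) ≅ B ⊗_C Ω_C(M), provided the radicals satisfy B ⊗_C J_C ⊆ J_B (as holds for B = B_n^!, C = C_n^! with B_n^! = C_n^! ⊕ ZC_n^! and J_{B_n^!} = J_{C_n^!} + ZC_n^!). -/
open TensorProduct

/-- Induction commutes with syzygies.  Let `C ⊆ B` be `K`-algebras with `B` free of
finite rank as a `C`-module and `B ⊗_C J_C ⊆ J_B` (radical compatibility, as holds for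
`B = B_n^!`, `C = C_n^!`).  If `f : F → M` is a minimal projective presentation of the
`C`-module `M` (i.e. `f` is surjective, `F` projective, and `ker f ⊆ J_C·F`, so that
`Ω_C(M) = ker f`), then the base-changed map `B ⊗_C F → B ⊗_C M` is again a minimal
projective presentation and `Ω_B(B ⊗_C M) = ker(1 ⊗ f) ≅ B ⊗_C Ω_C(M)`. -/
theorem syzygy_commutes_with_induction
    (C : Type) [CommRing C] (B : Type) [Ring B] [Algebra C B]
    (hfree : Module.Free C B) (hfin : Module.Finite C B)
    (hJ : ∀ x ∈ (⊥ : Ideal C).jacobson, algebraMap C B x ∈ (⊥ : Ideal B).jacobson)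
    (M F : Type) [AddCommGroup M] [Module C M] [AddCommGroup F] [Module C F]
    (hFproj : Module.Projective C F)
    (f : F →ₗ[C] M) (hf : Function.Surjective f)
    (hmin : LinearMap.ker f ≤ (⊥ : Ideal C).jacobson • (⊤ : Submodule C F)) :
    Function.Surjective (f.baseChange B) ∧
      Module.Projective B (B ⊗[C] F) ∧
      LinearMap.ker (f.baseChange B) ≤
        (⊥ : Ideal B).jacobson • (⊤ : Submodule B (B ⊗[C] F)) ∧
      Nonempty ((LinearMap.ker (f.baseChange B)) ≃ₗ[B] B ⊗[C] (LinearMap.ker f)) := by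
  haveI := hfree
  haveI := hFproj
  haveI : Module.Flat C B := inferInstance
  -- the inclusion of the base-changed kernel
  set ι : B ⊗[C] (LinearMap.ker f) →ₗ[B] B ⊗[C] F :=
    (LinearMap.ker f).subtype.baseChange B with hιdef
  have hιcoe : ⇑ι = ⇑((LinearMap.ker f).subtype.lTensor B) :=
    LinearMap.baseChange_eq_ltensor _
  have hinj : Function.Injective ι := by
    rw [hιcoe]
    exact Module.Flat.lTensor_preserves_injective_linearMap _ (Submodule.injective_subtype _)
  have hexact : Function.Exact ((LinearMap.ker f).subtype.lTensor B) (f.lTensor B) :=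
    Module.Flat.lTensor_exact B (LinearMap.exact_subtype_ker_map f)
  have hbc : ⇑(f.baseChange B) = ⇑(f.lTensor B) := LinearMap.baseChange_eq_ltensor _
  -- the kernel of the base-changed map is the range of ι
  have hker : ∀ x, x ∈ LinearMap.ker (f.baseChange B) ↔ ∃ y, ι y = x := by
    intro x
    rw [LinearMap.mem_ker, show f.baseChange B x = f.lTensor B x from congrFun hbc x]
    rw [hexact x]
    constructor
    · rintro ⟨y, hy⟩; exact ⟨y, by rw [congrFun hιcoe y, hy]⟩
    · rintro ⟨y, hy⟩; exact ⟨y, by rw [← congrFun hιcoe y, hy]⟩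
  refine ⟨?_, ?_, ?_, ?_⟩
  · -- surjectivity
    intro x
    obtain ⟨y, hy⟩ := LinearMap.lTensor_surjective B hf x
    exact ⟨y, by rw [congrFun hbc y, hy]⟩
  · -- projectivity
    infer_instance
  · -- minimality
    intro x hx
    obtain ⟨y, rfl⟩ := (hker x).mp hx
    clear hx
    induction y using TensorProduct.induction_on with
    | zero => simp
    | tmul b k =>
      have hk : (k : F) ∈ (⊥ : Ideal C).jacobson • (⊤ : Submodule C F) := hmin k.2
      have : ι (b ⊗ₜ[C] k) = b ⊗ₜ[C] (k : F) := by
        simp [hιdef]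
      rw [this]
      clear this
      refine Submodule.smul_induction_on hk ?_ ?_
      · intro c hc v _
        have h1 : b ⊗ₜ[C] (c • v) = (algebraMap C B c) • (b ⊗ₜ[C] v : B ⊗[C] F) := by
          rw [tmul_smul, algebraMap_smul]
        rw [h1]
        exact Submodule.smul_mem_smul (hJ c hc) trivial
      · intro u v hu hv
        rw [tmul_add]
        exact Submodule.add_mem _ hu hv
    | add u v hu hv =>
      rw [map_add]
      exact Submodule.add_mem _ hu hv
  · -- the isomorphism
    have hmem : ∀ y, ι y ∈ LinearMap.ker (f.baseChange B) := fun y => (hker (ι y)).mpr ⟨y, rfl⟩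
    refine ⟨(LinearEquiv.ofBijective (ι.codRestrict (LinearMap.ker (f.baseChange B)) hmem)
      ⟨?_, ?_⟩).symm⟩
    · intro a b hab
      exact hinj (congrArg Subtype.val hab)
    · rintro ⟨x, hx⟩
      obtain ⟨y, hy⟩ := (hker x).mp hx
      exact ⟨y, Subtype.ext hy⟩
end
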